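/- arXiv:2504.05943 — 2 statements merged into one kernel-verified Lean document; each statement's English description precedes it below -/
import Mathlib

section
/- Let n, m be nonnegative integers and k ≥ 0. If n ≤ m, then ∂_k(n) ≤ ∂_k(m); that is, the combinatorial shadow function ∂_k is monotone nondecreasing. -/
/-- Fold a function `g` over the terms `(a_t, t)` of the unique Macaulay-type
representation `n = C(a_{k+1}, k+1) + ⋯ + C(a_i, i)` with
`a_{k+1} > ⋯ > a_i ≥ i ≥ 1`, computed greedily: at each level `t` (from `k+1`
down), `a_t` is the largest `a` with `C(a, t) ≤` the current remainder. -/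
def macRepFold (g : ℕ → ℕ → ℕ) : ℕ → ℕ → ℕ
  | 0, _ => 0
  | t + 1, n =>
    if n = 0 then 0
    else
      let a := Nat.findGreatest (fun a => Nat.choose a (t + 1) ≤ n) (n + t + 1)
      g a (t + 1) + macRepFold g t (n - Nat.choose a (t + 1))

lemma choose_bound' (t n : ℕ) : n < Nat.choose (n + t + 1) (t + 1) := by
  induction n with
  | zero => simp
  | succ n ih =>
    have h : n + 1 + t + 1 = (n + t + 1) + 1 := by ring
    have h2 : Nat.choose (n + 1 + t + 1) (t + 1) =
        Nat.choose (n + t + 1) t + Nat.choose (n + t + 1) (t + 1) := by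
      rw [h]; exact Nat.choose_succ_succ _ _
    have h3 : 0 < Nat.choose (n + t + 1) t := Nat.choose_pos (by omega)
    omega

lemma macRepFold_zero (g : ℕ → ℕ → ℕ) (t : ℕ) : macRepFold g t 0 = 0 := by
  cases t <;> simp [macRepFold]

lemma macRepFold_succ (g : ℕ → ℕ → ℕ) (t n : ℕ) (hn : n ≠ 0) :
    macRepFold g (t + 1) n =
      g (Nat.findGreatest (fun a => Nat.choose a (t + 1) ≤ n) (n + t + 1)) (t + 1) +
        macRepFold g t
          (n - Nat.choose (Nat.findGreatest (fun a => Nat.choose a (t + 1) ≤ n) (n + t + 1)) (t + 1)) := by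
  simp [macRepFold, hn]

lemma greedy_facts (t n : ℕ) (hn : n ≠ 0) :
    Nat.choose (Nat.findGreatest (fun a => Nat.choose a (t + 1) ≤ n) (n + t + 1)) (t + 1) ≤ n ∧
    t + 1 ≤ Nat.findGreatest (fun a => Nat.choose a (t + 1) ≤ n) (n + t + 1) ∧
    Nat.findGreatest (fun a => Nat.choose a (t + 1) ≤ n) (n + t + 1) < n + t + 1 ∧
      ¬ Nat.choose (Nat.findGreatest (fun a => Nat.choose a (t + 1) ≤ n) (n + t + 1) + 1) (t + 1) ≤ n := by
  set a := Nat.findGreatest (fun a => Nat.choose a (t + 1) ≤ n) (n + t + 1) with ha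
  have hPt : Nat.choose (t + 1) (t + 1) ≤ n := by
    rw [Nat.choose_self]; omega
  have haP : Nat.choose a (t + 1) ≤ n := by
    rw [ha]
    exact Nat.findGreatest_spec (P := fun a => Nat.choose a (t + 1) ≤ n)
      (m := t + 1) (n := n + t + 1) (by omega) hPt
  have hage : t + 1 ≤ a := by
    rw [ha]
    exact Nat.le_findGreatest (by omega) hPt
  have hble : a ≤ n + t + 1 := by rw [ha]; exact Nat.findGreatest_le _
  have hbnd : ¬ Nat.choose (n + t + 1) (t + 1) ≤ n := by
    have := choose_bound' t n; omega
  have hane : a ≠ n + t + 1 := fun he => hbnd (he ▸ haP)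
  have halt : a < n + t + 1 := by omega
  refine ⟨haP, hage, halt, ?_⟩
  exact Nat.findGreatest_is_greatest (P := fun a => Nat.choose a (t + 1) ≤ n)
    (n := n + t + 1) (by omega) (by omega)

lemma macRepFold_bound : ∀ (t n c : ℕ), n ≤ Nat.choose c t →
    macRepFold (fun a s => Nat.choose a (s - 1)) t n ≤ Nat.choose c (t - 1) := by
  intro t
  induction t with
  | zero => intro n c _; simp [macRepFold]
  | succ t ih =>
    intro n c hn
    rcases Nat.eq_zero_or_pos n with rfl | hpos
    · simp [macRepFold_zero]
    have hn0 : n ≠ 0 := hpos.ne'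
    obtain ⟨haP, hage, halt, hnot⟩ := greedy_facts t n hn0
    set a := Nat.findGreatest (fun a => Nat.choose a (t + 1) ≤ n) (n + t + 1) with ha
    have hc : t + 1 ≤ c := by
      by_contra h
      have : Nat.choose c (t + 1) = 0 := Nat.choose_eq_zero_of_lt (by omega)
      omega
    have hac : a ≤ c := by
      by_contra h
      push_neg at h
      have h1 : Nat.choose (c + 1) (t + 1) ≤ Nat.choose a (t + 1) :=
        Nat.choose_le_choose _ (by omega)
      have h2 : Nat.choose (c + 1) (t + 1) =
          Nat.choose c t + Nat.choose c (t + 1) := Nat.choose_succ_succ _ _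
      have h3 : 0 < Nat.choose c t := Nat.choose_pos (by omega)
      omega
    rw [macRepFold_succ _ _ _ hn0, ← ha]
    simp only [Nat.add_sub_cancel]
    rcases eq_or_lt_of_le hac with rfl | hlt
    · have hr0 : n - Nat.choose a (t + 1) = 0 := by omega
      rw [hr0, macRepFold_zero]; simp
    · have hsucc : Nat.choose (a + 1) (t + 1) =
          Nat.choose a t + Nat.choose a (t + 1) := Nat.choose_succ_succ _ _
      have hr : n - Nat.choose a (t + 1) ≤ Nat.choose a t := by omega
      have key : Nat.choose a t +
          macRepFold (fun a s => Nat.choose a (s - 1)) t (n - Nat.choose a (t + 1)) ≤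
          Nat.choose (a + 1) t := by
        cases t with
        | zero => simp [macRepFold]
        | succ s =>
          have hih := ih (n - Nat.choose a (s + 1 + 1)) a hr
          have hps : Nat.choose (a + 1) (s + 1) =
              Nat.choose a s + Nat.choose a (s + 1) := Nat.choose_succ_succ _ _
          simp only [Nat.add_sub_cancel] at hih ⊢
          omega
      have hfin : Nat.choose (a + 1) t ≤ Nat.choose c t :=
        Nat.choose_le_choose _ (by omega)
      omega

lemma macRepFold_mono : ∀ (t n m : ℕ), n ≤ m →
    macRepFold (fun a s => Nat.choose a (s - 1)) t n ≤
      macRepFold (fun a s => Nat.choose a (s - 1)) t m := by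
  intro t
  induction t with
  | zero => intro n m _; simp [macRepFold]
  | succ t ih =>
    intro n m hnm
    rcases Nat.eq_zero_or_pos n with rfl | hpos
    · simp [macRepFold_zero]
    have hn0 : n ≠ 0 := hpos.ne'
    have hm0 : m ≠ 0 := by omega
    obtain ⟨haP, hage, halt, hnot⟩ := greedy_facts t n hn0
    obtain ⟨hbP, hbge, hblt, hbnot⟩ := greedy_facts t m hm0
    set a := Nat.findGreatest (fun a => Nat.choose a (t + 1) ≤ n) (n + t + 1) with ha
    set b := Nat.findGreatest (fun a => Nat.choose a (t + 1) ≤ m) (m + t + 1) with hb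
    have hab : a ≤ b := Nat.le_findGreatest (by omega) (le_trans haP hnm)
    rcases eq_or_lt_of_le hab with he | hlt
    · rw [macRepFold_succ _ _ _ hn0, macRepFold_succ _ _ _ hm0, ← ha, ← hb, ← he]
      exact Nat.add_le_add_left (ih _ _ (by omega)) _
    · have h1 : macRepFold (fun a s => Nat.choose a (s - 1)) (t + 1) n ≤
          Nat.choose (a + 1) t := by
        have hb1 := macRepFold_bound (t + 1) n (a + 1) (by omega)
        simpa using hb1
      have h2 : Nat.choose (a + 1) t ≤ Nat.choose b t :=
        Nat.choose_le_choose _ (by omega)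
      have h3 : Nat.choose b t ≤
          macRepFold (fun a s => Nat.choose a (s - 1)) (t + 1) m := by
        rw [macRepFold_succ _ _ _ hm0, ← hb]
        simp only [Nat.add_sub_cancel]
        exact Nat.le_add_right _ _
      omega


/-- The combinatorial shadow function `∂_k(n) = Σ_t C(a_t, t - 1)`. -/
def partialLower (k n : ℕ) : ℕ := macRepFold (fun a t => Nat.choose a (t - 1)) (k + 1) n

/-- The combinatorial shadow function `∂^k(n) = Σ_t C(a_t - 1, t)`. -/
def partialUpper (k n : ℕ) : ℕ := macRepFold (fun a t => Nat.choose (a - 1) t) (k + 1) n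

/-- The error function `δ_k(n) = #{t : a_t = t}`. -/
def deltaErr (k n : ℕ) : ℕ := macRepFold (fun a t => if a = t then 1 else 0) (k + 1) n

/-- The function `d^k(n) = Σ_t C(a_t + 1, t)`. -/
def dUpper (k n : ℕ) : ℕ := macRepFold (fun a t => Nat.choose (a + 1) t) (k + 1) n

/-- Lemma 2.5(b): `∂_k` is monotone nondecreasing. -/
theorem partialLower_mono (k n m : ℕ) (h : n ≤ m) :
    partialLower k n ≤ partialLower k m := by
  exact macRepFold_mono (k + 1) n m h
end

section
/- Let f = (f_0, f_1, …) and β = (β_0, β_1, …) be eventually-zero sequences of nonnegative integers such that χ_k + β_k ≥ 0 for all k ≥ 1, and let ε = (ε_1, ε_2, …) be a sequence of integers with 0 ≤ ε_k ≤ δ_k(f_k) for all k ≥ 1. Then ∂_k(χ_k + β_k) ≤ χ_{k−1} holds for all k ≥ 1 if and only if ∂_k(χ_k + β_k) ≤ χ_{k−1} − ε_k holds for all k ≥ 1. -/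
/-! Write `n = χ_k + β_k`. Since `χ_{k-1} + χ_k = f_k - β_k`, the inequality `∂_k(n) ≤ χ_{k-1}`
says `d^k(n) ≤ f_k`, where `d^k(n) = Σ C(a_t + 1, t) = n + ∂_k(n)` by Pascal's rule. The greedy
coefficients of `d^k(n)` are the `a_t + 1 > t`, so `δ_k(d^k(n)) = 0`; and whenever `v ≤ m` with
`δ_k(v) = 0` one has `v + δ_k(m) ≤ m`: either `v` and `m` share their top coefficient, which then
carries no error, or `v` lies below the top binomial of `m`, leaving room for one error term on top
of the bound `δ ≤ id` for the rest. Hence `∂_k(n) ≤ χ_{k-1} - δ_k(f_k) ≤ χ_{k-1} - ε_k`. -/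

def macRepTop (t n : ℕ) : ℕ := Nat.findGreatest (fun a => a.choose t ≤ n) (n + t)

theorem lt_choose_add_self (n : ℕ) {t : ℕ} (ht : 1 ≤ t) : n < (n + t).choose t := by
  rw [← Nat.choose_symm_add, Nat.lt_iff_add_one_le, ← Nat.choose_succ_self_right]
  exact Nat.choose_le_choose n (by omega)

section macRepTop

variable {t n : ℕ}

theorem macRepTop_spec (ht : 1 ≤ t) (hn : 1 ≤ n) :
    (macRepTop t n).choose t ≤ n ∧ n < (macRepTop t n + 1).choose t ∧ t ≤ macRepTop t n := by
  have hP : t.choose t ≤ n := by rwa [Nat.choose_self]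
  have hle : macRepTop t n ≤ n + t := Nat.findGreatest_le _
  have hne : macRepTop t n ≠ n + t := fun h => by
    have := Nat.findGreatest_spec (P := fun a => a.choose t ≤ n) (Nat.le_add_left t n) hP
    rw [← macRepTop, h] at this
    exact (lt_choose_add_self n ht).not_ge this
  refine ⟨Nat.findGreatest_spec (P := fun a => a.choose t ≤ n) (Nat.le_add_left t n) hP, ?_,
    Nat.le_findGreatest (Nat.le_add_left t n) hP⟩
  exact not_le.1 (Nat.findGreatest_is_greatest (P := fun a => a.choose t ≤ n)
    (Nat.lt_succ_self _) (show macRepTop t n + 1 ≤ n + t by omega))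

theorem macRepTop_eq {c : ℕ} (ht : 1 ≤ t) (htc : t ≤ c)
    (hc : c.choose t ≤ n) (hn : n < (c + 1).choose t) : macRepTop t n = c := by
  obtain ⟨h₁, h₂, -⟩ := macRepTop_spec ht (le_trans (Nat.choose_pos htc) hc)
  have : macRepTop t n ≤ c := by
    by_contra! h
    exact (Nat.choose_le_choose t h).trans h₁ |>.not_gt hn
  have : c ≤ macRepTop t n := by
    by_contra! h
    exact (Nat.choose_le_choose t h).trans hc |>.not_gt h₂
  omega

theorem macRepTop_one (hn : 1 ≤ n) : macRepTop 1 n = n :=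
  macRepTop_eq le_rfl hn (by simp) (by simp)

end macRepTop

section macRepFold

variable (g h : ℕ → ℕ → ℕ)

@[simp]
theorem macRepFold_zero_right (t : ℕ) : macRepFold g t 0 = 0 := by
  cases t <;> simp [macRepFold]

theorem macRepFold_succ_of_ne_zero (t : ℕ) {n : ℕ} (hn : n ≠ 0) :
    macRepFold g (t + 1) n = g (macRepTop (t + 1) n) (t + 1) +
      macRepFold g t (n - (macRepTop (t + 1) n).choose (t + 1)) := by
  rw [macRepFold, if_neg hn]
  rfl

variable {g h}

theorem macRepFold_mono_s13 (hgh : ∀ a t, 0 < t → g a t ≤ h a t) (K n : ℕ) :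
    macRepFold g K n ≤ macRepFold h K n := by
  induction K generalizing n with
  | zero => simp [macRepFold]
  | succ K ih =>
    rcases eq_or_ne n 0 with rfl | hn
    · simp
    · rw [macRepFold_succ_of_ne_zero g K hn, macRepFold_succ_of_ne_zero h K hn]
      exact add_le_add (hgh _ _ K.succ_pos) (ih _)

theorem macRepFold_congr (hgh : ∀ a t, 0 < t → g a t = h a t) (K n : ℕ) :
    macRepFold g K n = macRepFold h K n :=
  le_antisymm (macRepFold_mono_s13 (fun a t ht => (hgh a t ht).le) K n)
    (macRepFold_mono_s13 (fun a t ht => (hgh a t ht).ge) K n)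

variable (g h)

theorem macRepFold_add (K n : ℕ) :
    macRepFold (fun a t => g a t + h a t) K n = macRepFold g K n + macRepFold h K n := by
  induction K generalizing n with
  | zero => simp [macRepFold]
  | succ K ih =>
    rcases eq_or_ne n 0 with rfl | hn
    · simp
    · simp only [macRepFold_succ_of_ne_zero _ K hn, ih]
      ring

end macRepFold

theorem macRepFold_choose (K n : ℕ) : macRepFold (fun a t => a.choose t) (K + 1) n = n := by
  induction K generalizing n with
  | zero =>
    rcases eq_or_ne n 0 with rfl | hn
    · simp
    · rw [macRepFold_succ_of_ne_zero _ 0 hn, macRepTop_one (Nat.one_le_iff_ne_zero.2 hn)]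
      simp [macRepFold]
  | succ K ih =>
    rcases eq_or_ne n 0 with rfl | hn
    · simp
    · rw [macRepFold_succ_of_ne_zero _ _ hn, ih]
      have := (macRepTop_spec (t := K + 1 + 1) (by omega) (Nat.one_le_iff_ne_zero.2 hn)).1
      omega

theorem dUpper_eq_add_partialLower (k n : ℕ) : dUpper k n = n + partialLower k n := by
  have pascal : ∀ a t, 0 < t → (a + 1).choose t = a.choose t + a.choose (t - 1) := by
    rintro a (_ | t) ht
    · omega
    · rw [Nat.choose_succ_succ', Nat.add_sub_cancel, add_comm]
  rw [dUpper, macRepFold_congr pascal, macRepFold_add, macRepFold_choose, partialLower]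

-- `δ` and `d` at level `K` (the number of binomial terms): `deltaErr k = macRepErr (k + 1)`.
def macRepErr (K n : ℕ) : ℕ := macRepFold (fun a t => if a = t then 1 else 0) K n

def macRepShift (K n : ℕ) : ℕ := macRepFold (fun a t => (a + 1).choose t) K n

theorem macRepErr_succ_of_ne_zero (t : ℕ) {n : ℕ} (hn : n ≠ 0) :
    macRepErr (t + 1) n = (if macRepTop (t + 1) n = t + 1 then 1 else 0) +
      macRepErr t (n - (macRepTop (t + 1) n).choose (t + 1)) :=
  macRepFold_succ_of_ne_zero _ t hn

theorem macRepShift_succ_of_ne_zero (t : ℕ) {n : ℕ} (hn : n ≠ 0) :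
    macRepShift (t + 1) n = (macRepTop (t + 1) n + 1).choose (t + 1) +
      macRepShift t (n - (macRepTop (t + 1) n).choose (t + 1)) :=
  macRepFold_succ_of_ne_zero _ t hn

theorem macRepErr_le (K n : ℕ) : macRepErr K n ≤ n := by
  cases K with
  | zero => simp [macRepErr, macRepFold]
  | succ K =>
    calc macRepErr (K + 1) n ≤ macRepFold (fun a t => a.choose t) (K + 1) n :=
          macRepFold_mono_s13 (fun a t _ => by split_ifs with h <;> simp [h]) _ _
      _ = n := macRepFold_choose K n

theorem sub_choose_macRepTop_lt {t n : ℕ} (hn : n ≠ 0) :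
    n - (macRepTop (t + 1) n).choose (t + 1) < (macRepTop (t + 1) n).choose t := by
  obtain ⟨h₁, h₂, -⟩ := macRepTop_spec (t := t + 1) (by omega) (Nat.one_le_iff_ne_zero.2 hn)
  rw [Nat.choose_succ_succ'] at h₂
  omega

theorem macRepShift_lt_choose_succ {t m b : ℕ} (h : m < b.choose t) :
    macRepShift t m < (b + 1).choose t := by
  induction t generalizing m b with
  | zero => simp [macRepShift, macRepFold]
  | succ t ih =>
    have hb : t + 1 ≤ b := by
      by_contra! hb
      rw [Nat.choose_eq_zero_of_lt hb] at h
      omega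
    rcases eq_or_ne m 0 with rfl | hm
    · simpa [macRepShift] using Nat.choose_pos (by omega)
    set a := macRepTop (t + 1) m
    obtain ⟨h₁, -, -⟩ := macRepTop_spec (t := t + 1) (by omega) (Nat.one_le_iff_ne_zero.2 hm)
    have hab : a + 1 ≤ b := by
      by_contra! hab
      exact (Nat.choose_le_choose (t + 1) (Nat.lt_succ_iff.1 hab)).trans h₁ |>.not_gt h
    rw [macRepShift_succ_of_ne_zero t hm]
    calc (a + 1).choose (t + 1) + macRepShift t (m - a.choose (t + 1))
        < (a + 1).choose (t + 1) + (a + 1).choose t :=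
          Nat.add_lt_add_left (ih (sub_choose_macRepTop_lt hm)) _
      _ = (a + 2).choose (t + 1) := by rw [Nat.choose_succ_succ' (a + 1), add_comm]
      _ ≤ (b + 1).choose (t + 1) := Nat.choose_le_choose _ (by omega)

theorem macRepErr_macRepShift (K n : ℕ) : macRepErr K (macRepShift K n) = 0 := by
  induction K generalizing n with
  | zero => simp [macRepErr, macRepFold]
  | succ K ih =>
    rcases eq_or_ne n 0 with rfl | hn
    · simp [macRepErr, macRepShift]
    obtain ⟨-, -, hKa⟩ := macRepTop_spec (t := K + 1) (by omega) (Nat.one_le_iff_ne_zero.2 hn)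
    set a := macRepTop (K + 1) n
    set r := n - a.choose (K + 1)
    have hr : macRepShift K r < (a + 1).choose K :=
      macRepShift_lt_choose_succ (sub_choose_macRepTop_lt hn)
    have hne : (a + 1).choose (K + 1) + macRepShift K r ≠ 0 :=
      (Nat.add_pos_left (Nat.choose_pos (by omega)) _).ne'
    have htop : macRepTop (K + 1) ((a + 1).choose (K + 1) + macRepShift K r) = a + 1 :=
      macRepTop_eq (c := a + 1) (by omega) (by omega) (by omega)
        (by rw [Nat.choose_succ_succ' (a + 1)]; omega)
    rw [macRepShift_succ_of_ne_zero K hn, macRepErr_succ_of_ne_zero K hne, htop,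
      if_neg (by omega), Nat.add_sub_cancel_left, ih]

theorem add_macRepErr_le_of_macRepErr_eq_zero (K : ℕ) {v m : ℕ} (hv : macRepErr K v = 0)
    (hvm : v ≤ m) : v + macRepErr K m ≤ m := by
  induction K generalizing v m with
  | zero => simpa [macRepErr, macRepFold]
  | succ K ih =>
    rcases eq_or_ne v 0 with rfl | hv0
    · simpa using macRepErr_le (K + 1) m
    have hm0 : m ≠ 0 := by omega
    obtain ⟨hv₁, hv₂, -⟩ := macRepTop_spec (t := K + 1) (by omega) (Nat.one_le_iff_ne_zero.2 hv0)
    obtain ⟨hm₁, hm₂, hKm⟩ := macRepTop_spec (t := K + 1) (by omega) (Nat.one_le_iff_ne_zero.2 hm0)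
    rw [macRepErr_succ_of_ne_zero K hv0] at hv
    rw [macRepErr_succ_of_ne_zero K hm0]
    generalize macRepTop (K + 1) v = a at *
    generalize macRepTop (K + 1) m = b at *
    have hab : a ≤ b := by
      by_contra! hab
      exact (Nat.choose_le_choose (K + 1) hab).trans hv₁ |>.trans hvm |>.not_gt hm₂
    rcases hab.lt_or_eq with hab | rfl
    · have hvb : v < b.choose (K + 1) := hv₂.trans_le (Nat.choose_le_choose _ hab)
      have := macRepErr_le K (m - b.choose (K + 1))
      split_ifs <;> omega
    · have ha : a ≠ K + 1 := fun h => by simp [h] at hv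
      rw [if_neg ha] at hv ⊢
      have := ih (v := v - a.choose (K + 1)) (m := m - a.choose (K + 1)) (by omega) (by omega)
      omega

theorem add_partialLower_add_deltaErr_le {k n m : ℕ} (h : n + partialLower k n ≤ m) :
    n + partialLower k n + deltaErr k m ≤ m := by
  rw [← dUpper_eq_add_partialLower] at h ⊢
  exact add_macRepErr_le_of_macRepErr_eq_zero (k + 1) (macRepErr_macRepShift (k + 1) n) h

theorem finsum_alternating_tail_add_succ {x : ℕ → ℤ} (hx : x.HasFiniteSupport) (k : ℕ) :
    (∑ᶠ j, if k ≤ j then (-1) ^ (j - k) * x j else 0) +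
      (∑ᶠ j, if k + 1 ≤ j then (-1) ^ (j - (k + 1)) * x j else 0) = x k := by
  have hfin (i : ℕ) : (fun j => if i ≤ j then (-1 : ℤ) ^ (j - i) * x j else 0).HasFiniteSupport :=
    Set.Finite.subset hx fun j hj => by
      by_contra hxj
      simp_all
  rw [← finsum_add_distrib (hfin k) (hfin (k + 1)), finsum_eq_single _ k fun j hjk => ?_]
  · simp
  rcases hjk.lt_or_gt with hjk | hjk
  · simp [show ¬k ≤ j by omega, show ¬k + 1 ≤ j by omega]
  · rw [if_pos hjk.le, if_pos (show k + 1 ≤ j from hjk), show j - k = j - (k + 1) + 1 by omega,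
      pow_succ]
    ring

-- `χ k` is the paper's `χ_{k-1}`, so `χ_k + β_k` is `χ (k + 1) + β k`.
/-- Corollary 1.5, (b) ⟺ (b*): for eventually-zero sequences `f, β` of nonnegative
integers with `χ_k + β_k ≥ 0` for all `k ≥ 1`, and any integer sequence `ε` with
`0 ≤ ε_k ≤ δ_k(f_k)`: `∂_k(χ_k + β_k) ≤ χ_{k−1}` for all `k ≥ 1` iff
`∂_k(χ_k + β_k) ≤ χ_{k−1} − ε_k` for all `k ≥ 1`.
Here `χ k` denotes `χ_{k−1} = Σ_{j ≥ k} (−1)^{j−k}(f_j − β_j)`,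
so `χ_k + β_k = χ (k+1) + β k`. -/
theorem shadow_ineq_iff_shadow_ineq_sub_err (f β : ℕ → ℕ)
    (hf : ∃ N, ∀ j, N ≤ j → f j = 0) (hβ : ∃ N, ∀ j, N ≤ j → β j = 0)
    (χ : ℕ → ℤ)
    (hχ : ∀ k, χ k = ∑ᶠ j : ℕ,
      if k ≤ j then (-1 : ℤ) ^ (j - k) * ((f j : ℤ) - (β j : ℤ)) else 0)
    (hpos : ∀ k, 1 ≤ k → 0 ≤ χ (k + 1) + (β k : ℤ))
    (ε : ℕ → ℤ) (hε0 : ∀ k, 1 ≤ k → 0 ≤ ε k)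
    (hε : ∀ k, 1 ≤ k → ε k ≤ (deltaErr k (f k) : ℤ)) :
    (∀ k, 1 ≤ k → (partialLower k (χ (k + 1) + (β k : ℤ)).toNat : ℤ) ≤ χ k) ↔
    (∀ k, 1 ≤ k → (partialLower k (χ (k + 1) + (β k : ℤ)).toNat : ℤ) ≤ χ k - ε k) := by
  obtain ⟨Nf, hNf⟩ := hf
  obtain ⟨Nβ, hNβ⟩ := hβ
  have hsupp : (fun j => (f j : ℤ) - β j).HasFiniteSupport :=
    (Set.finite_Iio (max Nf Nβ)).subset fun j hj => by
      by_contra hj'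
      simp_all [hNf j (by simp_all), hNβ j (by simp_all)]
  have hstep (k : ℕ) : χ k + χ (k + 1) = f k - β k := by
    rw [hχ, hχ]
    exact finsum_alternating_tail_add_succ hsupp k
  refine ⟨fun H k hk => ?_, fun H k hk => (H k hk).trans (sub_le_self _ (hε0 k hk))⟩
  have hshadow := H k hk
  have hεk := hε k hk
  have hstepk := hstep k
  set n := (χ (k + 1) + β k).toNat
  have hn : (n : ℤ) = χ (k + 1) + β k := Int.toNat_of_nonneg (hpos k hk)
  have hle : n + partialLower k n ≤ f k := by omega
  have := add_partialLower_add_deltaErr_le hle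
  omega
end
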